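/- For any random variable $Q$ taking values in $[0,1]$ whose complementary CDF satisfies $\Pr[Q \ge \lambda] \le [1-(1-(1-\lambda)^{N_r-1})^{K-N_r}]^N$ for all $\lambda \in [0,1]$ (with integers $K > N_r \ge 2$ and $N \ge 1$), the expectation satisfies $\mathbb{E}[Q] < N^{-1/(K-N_r)}$. -/

import Mathlib

open MeasureTheory Real Set

/-! By the layer-cake formula `𝔼[Q] = ∫₀¹ Pr[Q ≥ λ] dλ`. Since `(1 - λ)^(N_r - 1) ≤ 1 - λ`,
the tail bound is at most `(1 - λ^q)^N ≤ exp (-N λ^q)` with `q = K - N_r`, and integrating over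
the whole half-line instead of `(0, 1]` makes the inequality strict. Finally
`∫₀^∞ exp (-N λ^q) dλ = N^(-1/q) Γ(1 + 1/q)`, and `Γ ≤ 1` on `[1, 2]` by convexity. -/

lemma Real.Gamma_le_one_of_mem_Icc {x : ℝ} (hx : x ∈ Icc 1 2) : Gamma x ≤ 1 := by
  obtain ⟨h1, h2⟩ := hx
  have hconv := convexOn_Gamma.2 (mem_Ioi.2 one_pos) (mem_Ioi.2 two_pos)
    (sub_nonneg.2 h2) (sub_nonneg.2 h1) (by ring)
  rw [Gamma_one, Gamma_two, smul_eq_mul, smul_eq_mul] at hconv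
  calc Gamma x = Gamma ((2 - x) * 1 + (x - 1) * 2) := by ring_nf
    _ ≤ (2 - x) * 1 + (x - 1) * 1 := hconv
    _ = 1 := by ring

lemma integral_exp_neg_mul_rpow_le {p b : ℝ} (hp : 1 ≤ p) (hb : 0 < b) :
    ∫ t in Ioi 0, exp (-b * t ^ p) ≤ b ^ (-1 / p) := by
  have hp0 : 0 < p := zero_lt_one.trans_le hp
  have hGamma : Gamma (1 / p + 1) ≤ 1 := by
    refine Gamma_le_one_of_mem_Icc ⟨by simp [hp0.le], ?_⟩
    linarith [(div_le_one hp0).2 hp]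
  rw [integral_exp_neg_mul_rpow hp0 hb]
  exact mul_le_of_le_one_right (rpow_nonneg hb.le _) hGamma

lemma integrableOn_exp_neg_mul_rpow {p b : ℝ} (hp : 0 < p) (hb : 0 < b) :
    IntegrableOn (fun t ↦ exp (-b * t ^ p)) (Ioi 0) := by
  simpa using integrableOn_rpow_mul_exp_neg_mul_rpow (s := 0) (by norm_num) hp hb

lemma setIntegral_Ioc_lt_setIntegral_Ioi {f : ℝ → ℝ} {a b : ℝ} (hab : a ≤ b)
    (hf : IntegrableOn f (Ioi a)) (hpos : ∀ t, 0 < f t) :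
    ∫ t in Ioc a b, f t < ∫ t in Ioi a, f t := by
  have htail : 0 < ∫ t in Ioi b, f t := by
    rw [setIntegral_pos_iff_support_of_nonneg_ae (ae_of_all _ fun t ↦ (hpos t).le)
      (hf.mono_set (Ioi_subset_Ioi hab)), Function.support_eq_univ (fun t ↦ (hpos t).ne'),
      univ_inter, Real.volume_Ioi]
    exact ENNReal.zero_lt_top
  rw [← Ioc_union_Ioi_eq_Ioi hab, setIntegral_union (Ioc_disjoint_Ioi le_rfl) measurableSet_Ioi
    (hf.mono_set Ioc_subset_Ioi_self) (hf.mono_set (Ioi_subset_Ioi hab))]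
  linarith

lemma one_sub_pow_le_exp_neg_mul {x : ℝ} (hx : x ≤ 1) (n : ℕ) :
    (1 - x) ^ n ≤ exp (-n * x) := by
  calc (1 - x) ^ n ≤ exp (-x) ^ n := pow_le_pow_left₀ (sub_nonneg.2 hx) (one_sub_le_exp_neg x) n
    _ = exp (-n * x) := by rw [← exp_nat_mul]; ring_nf

lemma one_sub_one_sub_one_sub_pow_pow_pow_le {t : ℝ} (ht : t ∈ Icc 0 1) {m : ℕ} (hm : m ≠ 0)
    (q N : ℕ) : (1 - (1 - (1 - t) ^ m) ^ q) ^ N ≤ (1 - t ^ q) ^ N := by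
  obtain ⟨ht0, ht1⟩ := ht
  have hpow : (1 - t) ^ m ≤ 1 - t := pow_le_of_le_one (by linarith) (by linarith) hm
  have hs : 1 - (1 - t) ^ m ≤ 1 := by linarith [pow_nonneg (sub_nonneg.2 ht1) m]
  have hsq : (1 - (1 - t) ^ m) ^ q ≤ 1 := pow_le_one₀ (by linarith) hs
  have htq : t ^ q ≤ (1 - (1 - t) ^ m) ^ q := pow_le_pow_left₀ ht0 (by linarith) q
  exact pow_le_pow_left₀ (by linarith) (by linarith) N

lemma integral_le_setIntegral_Ioc_of_measure_le {Ω : Type*} [MeasurableSpace Ω] {μ : Measure Ω}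
    [IsFiniteMeasure μ] {Q : Ω → ℝ} (hQ : AEStronglyMeasurable Q μ) {M : ℝ}
    (hrange : ∀ ω, Q ω ∈ Icc 0 M) {g : ℝ → ℝ} (hg : IntegrableOn g (Ioc 0 M))
    (hbound : ∀ t ∈ Ioc 0 M, (μ {ω | t ≤ Q ω}).toReal ≤ g t) :
    ∫ ω, Q ω ∂μ ≤ ∫ t in Ioc 0 M, g t := by
  have hQint : Integrable Q μ := (integrable_const M).mono' hQ <| ae_of_all _ fun ω ↦ by
    rw [norm_of_nonneg (hrange ω).1]; exact (hrange ω).2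
  rw [hQint.integral_eq_integral_Ioc_meas_le (ae_of_all _ fun ω ↦ (hrange ω).1)
    (ae_of_all _ fun ω ↦ (hrange ω).2)]
  exact integral_mono_of_nonneg (ae_of_all _ fun _ ↦ ENNReal.toReal_nonneg) hg
    ((ae_restrict_iff' measurableSet_Ioc).2 (ae_of_all _ hbound))

/-- For any random variable `Q` with values in `[0,1]` whose complementary CDF
satisfies `Pr[Q ≥ λ] ≤ [1-(1-(1-λ)^{N_r-1})^{K-N_r}]^N` for all `λ ∈ [0,1]` (with integers
`K > N_r ≥ 2`, `N ≥ 1`), we have `E[Q] < N^{-1/(K-N_r)}`. -/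
theorem stmt_3 {Ω : Type*} [MeasurableSpace Ω] (μ : Measure Ω) [IsProbabilityMeasure μ]
    (Nr K N : ℕ) (hNr : 2 ≤ Nr) (hK : Nr < K) (hN : 1 ≤ N)
    (Q : Ω → ℝ) (hmeas : Measurable Q)
    (hrange : ∀ ω, Q ω ∈ Set.Icc (0 : ℝ) 1)
    (hccdf : ∀ lam ∈ Set.Icc (0 : ℝ) 1,
      μ {ω | lam ≤ Q ω}
        ≤ ENNReal.ofReal ((1 - (1 - (1 - lam) ^ (Nr - 1)) ^ (K - Nr)) ^ N)) :
    ∫ ω, Q ω ∂μ < (N : ℝ) ^ (-(1 : ℝ) / (K - Nr)) := by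
  set q := K - Nr
  have hq : (1 : ℝ) ≤ q := by norm_cast; omega
  have hNpos : (0 : ℝ) < N := by exact_mod_cast hN
  have hgint := integrableOn_exp_neg_mul_rpow (zero_lt_one.trans_le hq) hNpos
  have hbound (t : ℝ) (ht : t ∈ Ioc 0 1) :
      (μ {ω | t ≤ Q ω}).toReal ≤ exp (-N * t ^ (q : ℝ)) := by
    have ht' : t ∈ Icc 0 1 := Ioc_subset_Icc_self ht
    have hmono := one_sub_one_sub_one_sub_pow_pow_pow_le ht' (m := Nr - 1) (by omega) q N
    refine ENNReal.toReal_le_of_le_ofReal (exp_pos _).le ((hccdf t ht').trans ?_)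
    rw [rpow_natCast]
    exact ENNReal.ofReal_le_ofReal
      (hmono.trans (one_sub_pow_le_exp_neg_mul (pow_le_one₀ ht.1.le ht.2) N))
  calc ∫ ω, Q ω ∂μ ≤ ∫ t in Ioc 0 1, exp (-N * t ^ (q : ℝ)) :=
        integral_le_setIntegral_Ioc_of_measure_le hmeas.aestronglyMeasurable hrange
          (hgint.mono_set Ioc_subset_Ioi_self) hbound
    _ < ∫ t in Ioi 0, exp (-N * t ^ (q : ℝ)) :=
        setIntegral_Ioc_lt_setIntegral_Ioi zero_le_one hgint fun _ ↦ exp_pos _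
    _ ≤ (N : ℝ) ^ (-1 / (q : ℝ)) := integral_exp_neg_mul_rpow_le hq hNpos
    _ = (N : ℝ) ^ (-(1 : ℝ) / (K - Nr)) := by rw [Nat.cast_sub hK.le]
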